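/- arXiv:2602.21159 — 3 statements merged into one kernel-verified Lean document; each statement's English description precedes it below -/
import Mathlib

section
/- Let N ≥ 2, α = (α₁,…,α_N) ∈ ℂ^N, and k ∈ {1,…,N} with Im α_k ≠ 0. The additive subgroup ℤ + α₁ℤ + ⋯ + α_Nℤ is dense in ℂ if and only if the only pair (r₁,r₂) ∈ ℚ² such that (r₁·(Re α_j · Im α_k − Re α_k · Im α_j) + r₂·Im α_j)/Im α_k ∈ ℚ for every j ∈ {1,…,N}\{k} is (r₁,r₂) = (0,0). -/
open Finset

/-- The lattice `ℤ + α₁ℤ + ⋯ + α_Nℤ ⊂ ℂ`. -/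
def latt {N : ℕ} (α : Fin N → ℂ) : Set ℂ :=
  {z : ℂ | ∃ (n₀ : ℤ) (n : Fin N → ℤ), z = (n₀ : ℂ) + ∑ j, α j * (n j : ℂ)}

/-!
An `ℝ`-linear functional `f` on `ℂ` is determined by `(f 1, f α_k)`, and the quotient in the
statement is `f α_j` for the functional with `(f 1, f α_k) = (r₁, r₂)`. So the theorem is
Kronecker's criterion in the plane: an additive subgroup `L` of a 2-dimensional real space is not
dense iff some nonzero functional is integer-valued on `L`; for `L` generated by `1, α_1, …, α_N`,
clearing denominators, iff some nonzero functional is rational on the generators.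

If `L` is discrete, either it spans and is a lattice, so a coordinate of a lattice basis works, or a
functional vanishing on its span does. Otherwise, normalising nonzero elements of `L` tending to `0`
gives a unit vector `w` with `ℝ w ⊆ closure L`. The projection `π` with kernel `ℝ w` maps `L` onto a
subgroup of `ℝ` which cannot be dense (else `L` would be), hence is cyclic, and a multiple of `π`
is integer-valued on `L`.
-/

open Filter Topology Module

theorem exists_zsmul_norm_sub_le {E : Type*} [NormedAddCommGroup E] [NormedSpace ℝ E]
    (s : ℝ) (g : E) : ∃ m : ℤ, ‖s • g - m • g‖ ≤ ‖g‖ := by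
  refine ⟨⌊s⌋, ?_⟩
  rw [← Int.cast_smul_eq_zsmul ℝ, ← sub_smul, norm_smul, Int.self_sub_floor, Real.norm_eq_abs,
    abs_of_nonneg (Int.fract_nonneg s)]
  exact mul_le_of_le_one_left (norm_nonneg g) (Int.fract_lt_one s).le

theorem AddSubgroup.exists_ne_zero_le_zmultiples_of_not_dense (S : AddSubgroup ℝ)
    (hS : ¬Dense (S : Set ℝ)) : ∃ a : ℝ, a ≠ 0 ∧ S ≤ AddSubgroup.zmultiples a := by
  obtain ⟨a, rfl⟩ := S.dense_xor_cyclic.or.resolve_left hS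
  rcases eq_or_ne a 0 with rfl | ha
  · exact ⟨1, one_ne_zero, by simp⟩
  · exact ⟨a, ha, le_rfl⟩

namespace Submodule

section Kronecker

variable {E : Type*} [NormedAddCommGroup E]

theorem zero_mem_closure_diff_of_not_discreteTopology (L : Submodule ℤ E)
    (hL : ¬DiscreteTopology L) : (0 : E) ∈ closure ((L : Set E) \ {0}) := by
  contrapose! hL
  refine discreteTopology_of_isOpen_singleton_zero (isOpen_induced_iff.mpr
    ⟨(closure ((L : Set E) \ {0}))ᶜ, isClosed_closure.isOpen_compl, ?_⟩)
  ext ⟨x, hx⟩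
  by_cases h : x = 0
  · simp [h, hL]
  · simpa [h] using subset_closure (s := (L : Set E) \ {0}) ⟨hx, h⟩

variable [NormedSpace ℝ E]

theorem exists_ne_zero_smul_mem_closure [ProperSpace E] (L : Submodule ℤ E)
    (hL : (0 : E) ∈ closure ((L : Set E) \ {0})) :
    ∃ w : E, w ≠ 0 ∧ ∀ t : ℝ, t • w ∈ closure (L : Set E) := by
  obtain ⟨g, hgL, hg0⟩ := mem_closure_iff_seq_limit.mp hL
  have hu n : ‖g n‖⁻¹ • g n ∈ Metric.sphere (0 : E) 1 := by
    simpa [norm_smul] using inv_mul_cancel₀ (norm_ne_zero_iff.mpr (hgL n).2)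
  obtain ⟨w, hw, φ, hφ, hconv⟩ := (isCompact_sphere (0 : E) 1).tendsto_subseq hu
  refine ⟨w, ne_zero_of_mem_unit_sphere ⟨w, hw⟩, fun t ↦ Metric.mem_closure_iff.mpr fun ε hε ↦ ?_⟩
  have hnorm : Tendsto (fun n ↦ ‖g (φ n)‖) atTop (𝓝 0) := by
    simpa using (hg0.comp hφ.tendsto_atTop).norm
  obtain ⟨n, hn_norm, hn_dist⟩ := ((hnorm.eventually (gt_mem_nhds (half_pos hε))).and
    ((hconv.const_smul t).eventually (Metric.ball_mem_nhds _ (half_pos hε)))).exists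
  set x := g (φ n)
  obtain ⟨m, hm⟩ := exists_zsmul_norm_sub_le (t / ‖x‖) x
  refine ⟨m • x, L.smul_mem m (hgL _).1, ?_⟩
  have hx : t • (‖x‖⁻¹ • x) = (t / ‖x‖) • x := by rw [smul_smul, div_eq_mul_inv]
  calc dist (t • w) (m • x) ≤ dist (t • w) (t • (‖x‖⁻¹ • x)) + dist (t • (‖x‖⁻¹ • x)) (m • x) :=
        dist_triangle _ _ _
    _ < ε / 2 + ε / 2 := by
        gcongr
        · rw [dist_comm]
          exact hn_dist
        · rw [hx, dist_eq_norm]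
          exact hm.trans_lt hn_norm
    _ = ε := add_halves ε

theorem exists_dual_int_of_discreteTopology [FiniteDimensional ℝ E] [Nontrivial E]
    (L : Submodule ℤ E) [DiscreteTopology L] :
    ∃ f : Dual ℝ E, f ≠ 0 ∧ ∀ x ∈ L, ∃ m : ℤ, f x = m := by
  by_cases hspan : span ℝ (L : Set E) = ⊤
  · have : IsZLattice ℝ L := ⟨hspan⟩
    let b := (Free.chooseBasis ℤ L).ofZLatticeBasis ℝ L
    obtain ⟨i⟩ := b.index_nonempty
    refine ⟨b.coord i, fun h ↦ by simpa using LinearMap.congr_fun h (b i), fun x hx ↦ ?_⟩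
    exact ⟨_, (Free.chooseBasis ℤ L).ofZLatticeBasis_repr_apply ℝ L ⟨x, hx⟩ i⟩
  · obtain ⟨f, hf, hmap⟩ := exists_dual_map_eq_bot_of_lt_top (lt_top_iff_ne_top.mpr hspan)
      inferInstance
    refine ⟨f, hf, fun x hx ↦ ⟨0, ?_⟩⟩
    simpa [hmap] using mem_map_of_mem (f := f) (subset_span hx)

theorem dense_of_ker_subset_closure (L : Submodule ℤ E) (π : E →L[ℝ] ℝ) {z₀ : E}
    (hz₀ : π z₀ = 1) (hker : ∀ z, π z = 0 → z ∈ closure (L : Set E))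
    (hdense : Dense (π '' L)) : Dense (L : Set E) := by
  let C := L.toAddSubgroup.topologicalClosure
  have hkerC z : z - π z • z₀ ∈ C := hker _ (by simp [hz₀])
  have hline (t : ℝ) : t • z₀ ∈ C := by
    rw [← SetLike.mem_coe, AddSubgroup.topologicalClosure_coe, ← closure_closure]
    refine map_mem_closure (f := (· • z₀)) (continuous_id.smul continuous_const) (hdense t) ?_
    rintro _ ⟨x, hx, rfl⟩
    show π x • z₀ ∈ C
    exact sub_sub_cancel x (π x • z₀) ▸ C.sub_mem (subset_closure hx) (hkerC x)
  intro z
  rw [← sub_add_cancel z (π z • z₀)]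
  exact C.add_mem (hkerC z) (hline (π z))

theorem exists_dual_int_of_smul_mem_closure (hE : finrank ℝ E = 2) (L : Submodule ℤ E) {w : E}
    (hw : w ≠ 0) (hline : ∀ t : ℝ, t • w ∈ closure (L : Set E)) (hL : ¬Dense (L : Set E)) :
    ∃ f : Dual ℝ E, f ≠ 0 ∧ ∀ x ∈ L, ∃ m : ℤ, f x = m := by
  have : FiniteDimensional ℝ E := Module.finite_of_finrank_eq_succ hE
  have hQ : finrank ℝ (E ⧸ ℝ ∙ w) = finrank ℝ ℝ := by
    have := (ℝ ∙ w).finrank_quotient_add_finrank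
    rw [finrank_span_singleton hw, hE] at this
    rw [finrank_self]
    omega
  let π : Dual ℝ E := (LinearEquiv.ofFinrankEq _ _ hQ).toLinearMap ∘ₗ (ℝ ∙ w).mkQ
  have hker z (hz : π z = 0) : z ∈ closure (L : Set E) := by
    obtain ⟨t, rfl⟩ := mem_span_singleton.mp <| by simpa [π] using hz
    exact hline t
  obtain ⟨z₀, hz₀⟩ : ∃ z₀, π z₀ = 1 :=
    ((LinearEquiv.ofFinrankEq _ _ hQ).surjective.comp (ℝ ∙ w).mkQ_surjective) 1
  have hS : ¬Dense (π '' L) := fun h ↦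
    hL (L.dense_of_ker_subset_closure (LinearMap.toContinuousLinearMap π) hz₀ hker h)
  obtain ⟨a, ha, hle⟩ :=
    (L.toAddSubgroup.map π.toAddMonoidHom).exists_ne_zero_le_zmultiples_of_not_dense hS
  refine ⟨a⁻¹ • π, fun h ↦ by simpa [hz₀, ha] using LinearMap.congr_fun h z₀, fun x hx ↦ ?_⟩
  obtain ⟨m, hm⟩ := AddSubgroup.mem_zmultiples_iff.mp (hle ⟨x, hx, rfl⟩)
  rw [LinearMap.toAddMonoidHom_coe, zsmul_eq_mul] at hm
  exact ⟨m, by rw [LinearMap.smul_apply, smul_eq_mul, ← hm]; field_simp⟩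

theorem not_dense_of_dual_int [FiniteDimensional ℝ E] (L : Submodule ℤ E) {f : Dual ℝ E}
    (hf : f ≠ 0) (hL : ∀ x ∈ L, ∃ m : ℤ, f x = m) : ¬Dense (L : Set E) := by
  intro hdense
  have hsub : f '' closure L ⊆ Set.range ((↑) : ℤ → ℝ) :=
    (image_closure_subset_closure_image (LinearMap.continuous_of_finiteDimensional f)).trans
      (closure_minimal (by rintro _ ⟨x, hx, rfl⟩; simpa [eq_comm] using hL x hx)
        Real.isClosed_range_intCast)
  obtain ⟨z, hz⟩ := LinearMap.surjective hf (1 / 2)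
  obtain ⟨m, hm⟩ := hsub ⟨z, hdense z, hz⟩
  have h2 : 2 * m = 1 := by exact_mod_cast (by linarith : (2 * m : ℝ) = 1)
  omega

theorem not_dense_iff_exists_dual_int (hE : finrank ℝ E = 2) (L : Submodule ℤ E) :
    ¬Dense (L : Set E) ↔ ∃ f : Dual ℝ E, f ≠ 0 ∧ ∀ x ∈ L, ∃ m : ℤ, f x = m := by
  have : FiniteDimensional ℝ E := Module.finite_of_finrank_eq_succ hE
  refine ⟨fun hL ↦ ?_, fun ⟨f, hf, hfL⟩ ↦ L.not_dense_of_dual_int hf hfL⟩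
  by_cases hdisc : DiscreteTopology L
  · have : Nontrivial E := Module.nontrivial_of_finrank_pos (R := ℝ) (by rw [hE]; norm_num)
    exact L.exists_dual_int_of_discreteTopology
  · obtain ⟨w, hw, hline⟩ := L.exists_ne_zero_smul_mem_closure
      (L.zero_mem_closure_diff_of_not_discreteTopology hdisc)
    exact L.exists_dual_int_of_smul_mem_closure hE hw hline hL

end Kronecker

theorem forall_mem_span_range_exists_int_iff {E ι : Type*} [AddCommGroup E] [Module ℝ E]
    (f : Dual ℝ E) (v : ι → E) :
    (∀ x ∈ span ℤ (Set.range v), ∃ m : ℤ, f x = m) ↔ ∀ i, ∃ m : ℤ, f (v i) = m := by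
  refine ⟨fun h i ↦ h _ (subset_span ⟨i, rfl⟩), fun h x hx ↦ ?_⟩
  induction hx using span_induction with
  | mem x hx =>
    obtain ⟨i, rfl⟩ := hx
    exact h i
  | zero => exact ⟨0, by simp⟩
  | add x y _ _ hx hy =>
    obtain ⟨⟨m, hm⟩, ⟨n, hn⟩⟩ := And.intro hx hy
    exact ⟨m + n, by simp [hm, hn]⟩
  | smul a x _ hx =>
    obtain ⟨m, hm⟩ := hx
    exact ⟨a * m, by simp [hm]⟩

end Submodule

theorem exists_dual_int_iff_exists_dual_rat {E ι : Type*} [AddCommGroup E] [Module ℝ E]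
    [Finite ι] (v : ι → E) :
    (∃ f : Dual ℝ E, f ≠ 0 ∧ ∀ i, ∃ m : ℤ, f (v i) = m) ↔
      ∃ f : Dual ℝ E, f ≠ 0 ∧ ∀ i, ∃ q : ℚ, f (v i) = q := by
  refine ⟨fun ⟨f, hf, hv⟩ ↦ ⟨f, hf, fun i ↦ ?_⟩, fun ⟨f, hf, hv⟩ ↦ ?_⟩
  · obtain ⟨m, hm⟩ := hv i
    exact ⟨m, by simp [hm]⟩
  · choose q hq using hv
    obtain ⟨⟨b, hb⟩, hbq⟩ := IsLocalization.exist_integer_multiples_of_finite (nonZeroDivisors ℤ) q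
    refine ⟨(b : ℝ) • f, smul_ne_zero (by exact_mod_cast nonZeroDivisors.ne_zero hb) hf,
      fun i ↦ ?_⟩
    obtain ⟨m, hm⟩ := hbq i
    have : (m : ℚ) = b * q i := by simpa using hm
    refine ⟨m, ?_⟩
    rw [LinearMap.smul_apply, hq, smul_eq_mul]
    exact_mod_cast this.symm

namespace Complex

theorem dual_apply_eq (f : Dual ℝ ℂ) {ζ : ℂ} (hζ : ζ.im ≠ 0) (z : ℂ) :
    f z = (f 1 * (z.re * ζ.im - ζ.re * z.im) + f ζ * z.im) / ζ.im := by
  have h w : f w = w.re * f 1 + w.im * f I := by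
    rw [← smul_eq_mul w.re, ← smul_eq_mul w.im, ← map_smul, ← map_smul, ← map_add, real_smul,
      real_smul, mul_one, re_add_im]
  rw [h z, h ζ]
  field_simp
  ring

theorem exists_dual_apply_one_apply_eq {ζ : ℂ} (hζ : ζ.im ≠ 0) (r₁ r₂ : ℝ) :
    ∃ f : Dual ℝ ℂ, f 1 = r₁ ∧ f ζ = r₂ := by
  refine ⟨r₁ • reLm + ((r₂ - r₁ * ζ.re) / ζ.im) • imLm, by simp, ?_⟩
  simp
  field_simp
  ring

end Complex

theorem latt_eq_span {N : ℕ} (α : Fin N → ℂ) :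
    latt α = Submodule.span ℤ (Set.range (Fin.cons 1 α : Fin (N + 1) → ℂ)) := by
  ext z
  simp only [SetLike.mem_coe, Submodule.mem_span_range_iff_exists_fun, Fin.exists_fin_succ_pi,
    Fin.sum_univ_succ, Fin.cons_zero, Fin.cons_succ, zsmul_eq_mul, mul_one, eq_comm, mul_comm]
  rfl

theorem exists_dual_rat_iff_exists_rat_pair {N : ℕ} (α : Fin N → ℂ) {k : Fin N}
    (hk : (α k).im ≠ 0) :
    (∃ f : Dual ℝ ℂ, f ≠ 0 ∧ ∀ i, ∃ q : ℚ, f ((Fin.cons 1 α : Fin (N + 1) → ℂ) i) = q) ↔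
      ∃ r₁ r₂ : ℚ, (∀ j, j ≠ k → ∃ s : ℚ,
        ((r₁ : ℝ) * ((α j).re * (α k).im - (α k).re * (α j).im) + (r₂ : ℝ) * (α j).im) /
          (α k).im = (s : ℝ)) ∧ ¬(r₁ = 0 ∧ r₂ = 0) := by
  simp only [Fin.forall_fin_succ, Fin.cons_zero, Fin.cons_succ]
  constructor
  · rintro ⟨f, hf, ⟨r₁, h1⟩, hα⟩
    obtain ⟨r₂, h2⟩ := hα k
    refine ⟨r₁, r₂, fun j _ ↦ ?_, ?_⟩
    · obtain ⟨s, hs⟩ := hα j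
      exact ⟨s, by rw [← h1, ← h2, ← Complex.dual_apply_eq f hk, hs]⟩
    · rintro ⟨rfl, rfl⟩
      exact hf (LinearMap.ext fun z ↦ by simp [Complex.dual_apply_eq f hk z, h1, h2])
  · rintro ⟨r₁, r₂, hs, hr⟩
    obtain ⟨f, h1, h2⟩ := Complex.exists_dual_apply_one_apply_eq hk r₁ r₂
    refine ⟨f, ?_, ⟨r₁, h1⟩, fun j ↦ ?_⟩
    · rintro rfl
      exact hr ⟨by simpa using h1.symm, by simpa using h2.symm⟩
    · rcases eq_or_ne j k with rfl | hj
      · exact ⟨r₂, h2⟩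
      · obtain ⟨s, hs⟩ := hs j hj
        exact ⟨s, by rw [Complex.dual_apply_eq f hk, h1, h2, hs]⟩

theorem stmt12_general (N : ℕ) (α : Fin N → ℂ) (k : Fin N) (hk : (α k).im ≠ 0) :
    Dense (latt α) ↔
      (∀ r₁ r₂ : ℚ,
        (∀ j, j ≠ k → ∃ s : ℚ,
          ((r₁ : ℝ) * ((α j).re * (α k).im - (α k).re * (α j).im)
            + (r₂ : ℝ) * (α j).im) / (α k).im = (s : ℝ)) →
        r₁ = 0 ∧ r₂ = 0) := by
  rw [← not_iff_not, latt_eq_span,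
    Submodule.not_dense_iff_exists_dual_int Complex.finrank_real_complex]
  simp only [Submodule.forall_mem_span_range_exists_int_iff]
  rw [exists_dual_int_iff_exists_dual_rat, exists_dual_rat_iff_exists_rat_pair α hk]
  simp only [not_forall, exists_prop]

/-- Kronecker-approximation step: if `Im α_k ≠ 0`, the subgroup
`ℤ + α₁ℤ + ⋯ + α_Nℤ` is dense in `ℂ` iff the only `(r₁, r₂) ∈ ℚ²` with
`(r₁ (Re α_j Im α_k − Re α_k Im α_j) + r₂ Im α_j) / Im α_k ∈ ℚ` for every `j ≠ k`
is `(0, 0)`. -/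
theorem stmt12 (N : ℕ) (hN : 2 ≤ N) (α : Fin N → ℂ) (k : Fin N) (hk : (α k).im ≠ 0) :
    Dense (latt α) ↔
      (∀ r₁ r₂ : ℚ,
        (∀ j, j ≠ k → ∃ s : ℚ,
          ((r₁ : ℝ) * ((α j).re * (α k).im - (α k).re * (α j).im)
            + (r₂ : ℝ) * (α j).im) / (α k).im = (s : ℝ)) →
        r₁ = 0 ∧ r₂ = 0) :=
  stmt12_general N α k hk
end

section
/- Let N ≥ 2, α = (α₁,…,α_N) ∈ ℂ^N with Im α_k ≠ 0 for some k, Im α_j = 0 for every j ≠ k, and α_j ∈ ℚ for every j ≠ k. Then for each m ∈ ℤ the set 𝓜_N(α) ∩ t_m, where t_m = {z ∈ ℂ : Im z = m·Im α_k}, is countable and discrete (every point of it is isolated in t_m). -/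
/-!
Let `q` be a common denominator of the rationals `α_j`, `j ≠ k`. Then every value
`τ + ∑ α_j ξ_j` lies in the lattice `(1/q)ℤ + ℤ α_k`. A point `λ ∈ t_m` off the line
`m α_k + (1/q)ℤ` keeps a positive distance from this lattice: either the imaginary parts differ
by a nonzero integer multiple of `Im α_k`, or the real parts differ by at least
`dist(q Re(λ - m α_k), ℤ) / q`. So `D(α, λ)` holds there, even with a constant lower bound, and
`𝓜_N(α) ∩ t_m` lies on `m α_k + (1/q)ℤ`, a countable set whose points are `1/q` apart.
-/

open Finset

/-- The Diophantine condition `D(α, λ)` for `N` coefficients `α = (α₁, …, α_N)`. -/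
def dioph {N : ℕ} (α : Fin N → ℂ) (lam : ℂ) : Prop :=
  ∃ C > (0 : ℝ), ∃ M > (0 : ℝ), ∃ R > (0 : ℝ),
    ∀ (τ : ℤ) (ξ : Fin N → ℤ), R ≤ (|τ| : ℝ) + ∑ j, (|ξ j| : ℝ) →
      C * (((|τ| : ℝ) + ∑ j, (|ξ j| : ℝ)) ^ (-M)) ≤
        ‖(τ : ℂ) + (∑ j, α j * (ξ j : ℂ)) - lam‖

theorem exists_common_denominator {K : Type*} [DivisionRing K] [CharZero K] (s : Finset K)
    (hs : ∀ a ∈ s, ∃ r : ℚ, a = r) : ∃ q : ℕ, 0 < q ∧ ∀ a ∈ s, ∃ z : ℤ, (q : K) * a = z := by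
  classical
  induction s using Finset.induction_on with
  | empty => exact ⟨1, one_pos, by simp⟩
  | insert b s _ ih =>
    obtain ⟨q, hq, hqs⟩ := ih fun a ha => hs a (mem_insert_of_mem ha)
    obtain ⟨r, rfl⟩ := hs b (mem_insert_self b s)
    refine ⟨q * r.den, mul_pos hq r.pos, ?_⟩
    rw [forall_mem_insert]
    refine ⟨⟨q * r.num, ?_⟩, fun a ha => ?_⟩
    · have hr : (r.den : K) * r = r.num := by
        rw [← Rat.cast_natCast, ← Rat.cast_mul, r.den_mul_eq_num, Rat.cast_intCast]
      rw [Nat.cast_mul, mul_assoc, hr, Int.cast_mul, Int.cast_natCast]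
    · obtain ⟨z, hz⟩ := hqs a ha
      refine ⟨r.den * z, ?_⟩
      rw [mul_comm q, Nat.cast_mul, mul_assoc, hz, Int.cast_mul, Int.cast_natCast]

theorem exists_int_add_sum_mul_eq_div_add {ι : Type*} [Fintype ι] (α : ι → ℂ) (k : ι) {q : ℕ}
    (hq : q ≠ 0) (hα : ∀ j ≠ k, ∃ z : ℤ, (q : ℂ) * α j = z) (τ : ℤ) (ξ : ι → ℤ) :
    ∃ n : ℤ, (τ : ℂ) + ∑ j, α j * ξ j = n / q + ξ k * α k := by
  classical
  have hmem : (q : ℂ) * (τ + ∑ j ∈ univ.erase k, α j * ξ j) ∈ (Int.castAddHom ℂ).range := by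
    rw [mul_add, mul_sum]
    refine add_mem ⟨q * τ, by simp⟩ (sum_mem fun j hj => ?_)
    obtain ⟨z, hz⟩ := hα j (ne_of_mem_erase hj)
    exact ⟨z * ξ j, by simp [← mul_assoc, hz]⟩
  obtain ⟨n, hn⟩ := hmem
  refine ⟨n, ?_⟩
  have hq' : (q : ℂ) ≠ 0 := by exact_mod_cast hq
  rw [← add_sum_erase _ _ (mem_univ k)]
  simp only [Int.coe_castAddHom] at hn
  field_simp
  linear_combination -hn

theorem exists_pos_le_abs_intCast_div_sub {x q : ℝ} (hq : 0 < q) (hx : ∀ t : ℤ, x ≠ t / q) :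
    ∃ c > 0, ∀ n : ℤ, c ≤ |n / q - x| := by
  have hd : 0 < |round (q * x) - q * x| :=
    abs_pos.2 (sub_ne_zero.2 fun h => hx (round (q * x)) (by rw [eq_div_iff hq.ne']; linarith))
  refine ⟨|round (q * x) - q * x| / q, div_pos hd hq, fun n => ?_⟩
  have : |n / q - x| = |n - q * x| / q := by
    rw [← abs_of_pos hq, ← abs_div, abs_of_pos hq]; congr 1; field_simp
  rw [this]
  exact div_le_div_of_nonneg_right (by simpa only [abs_sub_comm] using round_le (q * x) n) hq.le

theorem dioph_of_forall_le_norm {N : ℕ} {α : Fin N → ℂ} {lam : ℂ} {c : ℝ} (hc : 0 < c)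
    (h : ∀ (τ : ℤ) (ξ : Fin N → ℤ), c ≤ ‖(τ : ℂ) + ∑ j, α j * ξ j - lam‖) : dioph α lam := by
  refine ⟨c, hc, 1, one_pos, 1, one_pos, fun τ ξ hs => le_trans ?_ (h τ ξ)⟩
  rw [Real.rpow_neg_one]
  exact mul_le_of_le_one_right hc.le (inv_le_one_of_one_le₀ hs)

theorem exists_pos_le_norm_intCast_div_add_intCast_mul_sub {a : ℂ} (ha : a.im ≠ 0) {q : ℕ}
    (hq : 0 < q) {m : ℤ} {lam : ℂ} (him : lam.im = m * a.im)
    (hlam : ∀ t : ℤ, lam ≠ m * a + t / q) :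
    ∃ c > 0, ∀ n l : ℤ, c ≤ ‖(n : ℂ) / q + l * a - lam‖ := by
  have hx : ∀ t : ℤ, (lam - m * a).re ≠ t / q := fun t ht => hlam t <| by
    apply Complex.ext <;> simp [← ht, him]
  obtain ⟨c, hc, hcle⟩ := exists_pos_le_abs_intCast_div_sub (Nat.cast_pos.2 hq) hx
  refine ⟨min c |a.im|, lt_min hc (abs_pos.2 ha), fun n l => ?_⟩
  rcases eq_or_ne l m with rfl | hlm
  · calc min c |a.im| ≤ |n / q - (lam - l * a).re| := (min_le_left _ _).trans (hcle n)
      _ ≤ ‖(n : ℂ) / q + l * a - lam‖ := by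
        convert Complex.abs_re_le_norm _ using 2
        simp only [Complex.sub_re, Complex.add_re, Complex.mul_re, Complex.div_natCast_re,
          Complex.intCast_re, Complex.intCast_im, zero_mul, sub_zero]
        ring
  · have hlm' : (1 : ℝ) ≤ |(l : ℝ) - m| := by exact_mod_cast Int.one_le_abs (sub_ne_zero.2 hlm)
    calc min c |a.im| ≤ |(l : ℝ) - m| * |a.im| :=
          (min_le_right _ _).trans (le_mul_of_one_le_left (abs_nonneg _) hlm')
      _ = |((n : ℂ) / q + l * a - lam).im| := by
        rw [← abs_mul]
        congr 1
        simp only [Complex.sub_im, Complex.add_im, Complex.mul_im, Complex.div_natCast_im,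
          Complex.intCast_re, Complex.intCast_im, zero_div, zero_mul, add_zero, zero_add, him]
        ring
      _ ≤ ‖(n : ℂ) / q + l * a - lam‖ := Complex.abs_im_le_norm _

theorem exists_eq_intCast_div_of_not_dioph {N : ℕ} {α : Fin N → ℂ} {k : Fin N} (hk : (α k).im ≠ 0)
    {q : ℕ} (hq : 0 < q) (hα : ∀ j ≠ k, ∃ z : ℤ, (q : ℂ) * α j = z) {m : ℤ} {lam : ℂ}
    (hlam : ¬ dioph α lam) (him : lam.im = m * (α k).im) :
    ∃ t : ℤ, lam = m * α k + t / q := by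
  by_contra! hne
  obtain ⟨c, hc, hcle⟩ := exists_pos_le_norm_intCast_div_add_intCast_mul_sub hk hq him hne
  refine hlam (dioph_of_forall_le_norm hc fun τ ξ => ?_)
  obtain ⟨n, hn⟩ := exists_int_add_sum_mul_eq_div_add α k hq.ne' hα τ ξ
  rw [hn]
  exact hcle n (ξ k)

theorem eq_of_norm_intCast_div_sub_intCast_div_lt {q : ℕ} (hq : 0 < q) {t t' : ℤ}
    (h : ‖(t : ℂ) / q - t' / q‖ < 1 / q) : t = t' := by
  have hq' : (0 : ℝ) < q := Nat.cast_pos.2 hq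
  rw [← sub_div, ← Int.cast_sub, norm_div, Complex.norm_intCast, Complex.norm_natCast,
    div_lt_div_iff_of_pos_right hq'] at h
  exact sub_eq_zero.1 (Int.abs_lt_one_iff.1 (by exact_mod_cast h))

theorem stmt15_general (N : ℕ) (α : Fin N → ℂ) (k : Fin N)
    (hk : (α k).im ≠ 0)
    (hrat : ∀ j, j ≠ k → ∃ r : ℚ, α j = (r : ℂ)) (m : ℤ) :
    Set.Countable {lam : ℂ | ¬ dioph α lam ∧ lam.im = (m : ℝ) * (α k).im} ∧
      ∀ lam ∈ {lam : ℂ | ¬ dioph α lam ∧ lam.im = (m : ℝ) * (α k).im},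
        ∃ ε > (0 : ℝ), ∀ z ∈ {lam : ℂ | ¬ dioph α lam ∧ lam.im = (m : ℝ) * (α k).im},
          ‖z - lam‖ < ε → z = lam := by
  classical
  obtain ⟨q, hq, hqα⟩ := exists_common_denominator ((univ.erase k).image α) (by
    simpa only [forall_mem_image, mem_erase, mem_univ, and_true] using hrat)
  have hα : ∀ j ≠ k, ∃ z : ℤ, (q : ℂ) * α j = z := fun j hj =>
    hqα _ (mem_image_of_mem α (mem_erase.2 ⟨hj, mem_univ j⟩))
  have hline : ∀ lam ∈ {lam : ℂ | ¬ dioph α lam ∧ lam.im = (m : ℝ) * (α k).im},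
      ∃ t : ℤ, lam = m * α k + t / q := fun lam h =>
    exists_eq_intCast_div_of_not_dioph hk hq hα h.1 h.2
  refine ⟨(Set.countable_range fun t : ℤ => (m : ℂ) * α k + t / q).mono fun lam h => ?_,
    fun lam hlam => ⟨1 / q, by positivity, fun z hz hlt => ?_⟩⟩
  · obtain ⟨t, rfl⟩ := hline lam h
    exact ⟨t, rfl⟩
  · obtain ⟨t, rfl⟩ := hline lam hlam
    obtain ⟨t', rfl⟩ := hline z hz
    rw [add_sub_add_left_eq_sub] at hlt
    rw [eq_of_norm_intCast_div_sub_intCast_div_lt hq hlt]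

/-- If `Im α_k ≠ 0`, `Im α_j = 0` and `α_j ∈ ℚ` for all `j ≠ k`, then for each `m ∈ ℤ`
the set `𝓜_N(α) ∩ t_m` (with `t_m = {Im z = m Im α_k}`) is countable and discrete:
each of its points is isolated in `t_m`. -/
theorem stmt15 (N : ℕ) (hN : 2 ≤ N) (α : Fin N → ℂ) (k : Fin N)
    (hk : (α k).im ≠ 0) (hj : ∀ j, j ≠ k → (α j).im = 0)
    (hrat : ∀ j, j ≠ k → ∃ r : ℚ, α j = (r : ℂ)) (m : ℤ) :
    Set.Countable {lam : ℂ | ¬ dioph α lam ∧ lam.im = (m : ℝ) * (α k).im} ∧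
      ∀ lam ∈ {lam : ℂ | ¬ dioph α lam ∧ lam.im = (m : ℝ) * (α k).im},
        ∃ ε > (0 : ℝ), ∀ z ∈ {lam : ℂ | ¬ dioph α lam ∧ lam.im = (m : ℝ) * (α k).im},
          ‖z - lam‖ < ε → z = lam :=
  stmt15_general N α k hk hrat m
end

section
/- Let α₁, α₂ ∈ ℂ with Im α₁ ≠ 0, Im α₂ ≠ 0, and Im α₁/Im α₂ = p/q a rational number in lowest terms (p ∈ ℤ, q ∈ ℕ, q ≥ 1, gcd(p,q) = 1). Suppose q·Re α₁ − p·Re α₂ is irrational. Then: (a) 𝓝₂(α₁,α₂) is a dense G_δ subset of ℝ; (b) 𝓜₂(α₁,α₂) ⊆ ⋃_{m ∈ ℤ} ℓ_m, where ℓ_m = {λ ∈ ℂ : Im λ = m·Im α₂/q}; and (c) for each m ∈ ℤ the set ℓ_m ∩ 𝓜₂(α₁,α₂) is a dense G_δ subset of the line ℓ_m. -/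
/-!
Write `s = Im α₂ / q`, so that `Im α₁ = p s` and `Im α₂ = q s`. The imaginary part of
`τ + α₁ξ + α₂η − λ` is `(pξ + qη) s − Im λ`, so when `Im λ ∉ ℤ s` it stays a fixed distance
from `0` and the Diophantine condition holds: this gives (b). On the line `Im λ = m s`, Bézout
gives `pξ₀ + qη₀ = m`, and along the lattice points `(τ, ξ₀ + qt, η₀ − pt)` the residue is the
real number `τ + tθ + c − Re λ` with `θ = q Re α₁ − p Re α₂`. As `θ` is irrational these
numbers are dense, even after discarding finitely many `(τ, t)`, so every set of the form
"approximable to order `n` by a lattice point of size `> n`" meets the line in an open dense set.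
Their intersection is the failure set, a dense `G_δ` by Baire; (a) is the case `m = 0`.
-/

/-- The Diophantine condition `D((α₁, α₂), λ)` for two coefficients (`N = 2`). -/
def dioph2 (a b lam : ℂ) : Prop :=
  ∃ C > (0 : ℝ), ∃ M > (0 : ℝ), ∃ R > (0 : ℝ),
    ∀ τ ξ η : ℤ, R ≤ (|τ| : ℝ) + (|ξ| : ℝ) + (|η| : ℝ) →
      C * (((|τ| : ℝ) + (|ξ| : ℝ) + (|η| : ℝ)) ^ (-M)) ≤
        ‖(τ : ℂ) + a * (ξ : ℂ) + b * (η : ℂ) - lam‖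

open Set Metric Topology

/-- The negation of `dioph2 a b λ` tested only with `C = 1/(n+1)` and `M = R = n+1`. -/
def approxSet (a b : ℂ) (n : ℕ) : Set ℂ :=
  {lam | ∃ τ ξ η : ℤ, (n : ℝ) + 1 ≤ (|τ| : ℝ) + (|ξ| : ℝ) + (|η| : ℝ) ∧
    ‖(τ : ℂ) + a * (ξ : ℂ) + b * (η : ℂ) - lam‖ <
      ((n : ℝ) + 1)⁻¹ * ((|τ| : ℝ) + (|ξ| : ℝ) + (|η| : ℝ)) ^ (-((n : ℝ) + 1))}

section approxSet

variable (a b : ℂ)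

theorem setOf_not_dioph2_eq_iInter_approxSet :
    {lam | ¬ dioph2 a b lam} = ⋂ n, approxSet a b n := by
  ext lam
  simp only [mem_ofPred_eq, mem_iInter]
  constructor
  · intro h n
    by_contra hn
    simp only [approxSet, mem_ofPred_eq, not_exists, not_and, not_lt] at hn
    exact h ⟨((n : ℝ) + 1)⁻¹, by positivity, (n : ℝ) + 1, by positivity, (n : ℝ) + 1,
      by positivity, hn⟩
  · rintro h ⟨C, hC, M, hM, R, -, hD⟩
    obtain ⟨n, hn⟩ := exists_nat_ge (max (max M R) C⁻¹)
    obtain ⟨τ, ξ, η, hS, hlt⟩ := h n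
    set S : ℝ := (|τ| : ℝ) + (|ξ| : ℝ) + (|η| : ℝ)
    have hM : M ≤ n := (le_max_left _ _).trans ((le_max_left _ _).trans hn)
    have hR : R ≤ n := (le_max_right _ _).trans ((le_max_left _ _).trans hn)
    have hC' : ((n : ℝ) + 1)⁻¹ ≤ C := by
      rw [inv_le_comm₀ (by positivity) hC]
      linarith [le_max_right (max M R) C⁻¹]
    have hS1 : 1 ≤ S := by linarith [n.cast_nonneg (α := ℝ)]
    have hpow : S ^ (-((n : ℝ) + 1)) ≤ S ^ (-M) :=
      Real.rpow_le_rpow_of_exponent_le hS1 (by linarith)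
    have hlow := hD τ ξ η (by linarith)
    have hup : ((n : ℝ) + 1)⁻¹ * S ^ (-((n : ℝ) + 1)) ≤ C * S ^ (-M) := by gcongr
    linarith

theorem isOpen_approxSet (n : ℕ) : IsOpen (approxSet a b n) := by
  have : approxSet a b n = ⋃ τ : ℤ, ⋃ ξ : ℤ, ⋃ η : ℤ,
      {_lam : ℂ | (n : ℝ) + 1 ≤ (|τ| : ℝ) + (|ξ| : ℝ) + (|η| : ℝ)} ∩
      {lam | ‖(τ : ℂ) + a * (ξ : ℂ) + b * (η : ℂ) - lam‖ <
        ((n : ℝ) + 1)⁻¹ * ((|τ| : ℝ) + (|ξ| : ℝ) + (|η| : ℝ)) ^ (-((n : ℝ) + 1))} := by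
    ext; simp [approxSet]
  rw [this]
  exact isOpen_iUnion fun τ => isOpen_iUnion fun ξ => isOpen_iUnion fun η =>
    isOpen_const.inter (isOpen_lt (by fun_prop) continuous_const)

theorem lattice_mem_approxSet {n : ℕ} {τ ξ η : ℤ}
    (h : (n : ℝ) + 1 ≤ (|τ| : ℝ) + (|ξ| : ℝ) + (|η| : ℝ)) :
    (τ : ℂ) + a * (ξ : ℂ) + b * (η : ℂ) ∈ approxSet a b n := by
  refine ⟨τ, ξ, η, h, ?_⟩
  have : (0 : ℝ) < (|τ| : ℝ) + (|ξ| : ℝ) + (|η| : ℝ) := by linarith [n.cast_nonneg (α := ℝ)]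
  simpa using by positivity

theorem isGδ_setOf_not_dioph2 : IsGδ {lam | ¬ dioph2 a b lam} := by
  rw [setOf_not_dioph2_eq_iInter_approxSet]
  exact .iInter fun n => (isOpen_approxSet a b n).isGδ

end approxSet

theorem dioph2_of_forall_le_norm {a b lam : ℂ} {δ : ℝ} (hδ : 0 < δ)
    (h : ∀ τ ξ η : ℤ, δ ≤ ‖(τ : ℂ) + a * (ξ : ℂ) + b * (η : ℂ) - lam‖) : dioph2 a b lam := by
  refine ⟨δ, hδ, 1, one_pos, 1, one_pos, fun τ ξ η hS => ?_⟩
  have : ((|τ| : ℝ) + (|ξ| : ℝ) + (|η| : ℝ)) ^ (-(1 : ℝ)) ≤ 1 :=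
    Real.rpow_le_one_of_one_le_of_nonpos hS (by norm_num)
  nlinarith [h τ ξ η]

theorem exists_pos_le_abs_intCast_sub {u : ℝ} (hu : ∀ k : ℤ, u ≠ k) :
    ∃ d > 0, ∀ k : ℤ, d ≤ |(k : ℝ) - u| := by
  have hpos := (Real.isClosed_range_intCast.notMem_iff_infDist_pos (x := u)
    ⟨0, 0, Int.cast_zero⟩).1 (by rintro ⟨k, rfl⟩; exact hu k rfl)
  refine ⟨_, hpos, fun k => ?_⟩
  rw [abs_sub_comm, ← Real.dist_eq]
  exact infDist_le_dist_of_mem ⟨k, rfl⟩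

theorem dioph2_of_im_ne_intCast_mul {a b lam : ℂ} {s : ℝ} (hs : s ≠ 0) {p q : ℤ}
    (ha : a.im = p * s) (hb : b.im = q * s) (hlam : ∀ m : ℤ, lam.im ≠ m * s) :
    dioph2 a b lam := by
  obtain ⟨d, hd, hdk⟩ := exists_pos_le_abs_intCast_sub (u := lam.im / s) fun k hk =>
    hlam k (by rw [← hk, div_mul_cancel₀ _ hs])
  refine dioph2_of_forall_le_norm (mul_pos (abs_pos.2 hs) hd) fun τ ξ η => ?_
  have him : ((τ : ℂ) + a * ξ + b * η - lam).im = s * ((p * ξ + q * η : ℤ) - lam.im / s) := by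
    simp [ha, hb, mul_sub, mul_div_cancel₀ _ hs]
    ring
  calc |s| * d ≤ |s| * |((p * ξ + q * η : ℤ) : ℝ) - lam.im / s| := by gcongr; exact hdk _
    _ = |((τ : ℂ) + a * ξ + b * η - lam).im| := by rw [him, abs_mul]
    _ ≤ _ := Complex.abs_im_le_norm _

theorem denseRange_intCast_add_intCast_mul {θ : ℝ} (hθ : Irrational θ) :
    DenseRange fun k : ℤ × ℤ => (k.1 : ℝ) + k.2 * θ := by
  have := dense_addSubgroupClosure_pair_iff.2 (by simpa using hθ : Irrational (θ / 1))
  change Dense _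
  convert this using 1
  ext x
  simp only [mem_range, Prod.exists, SetLike.mem_coe, AddSubgroup.mem_closure_pair, zsmul_eq_mul,
    mul_one]
  exact ⟨fun ⟨a, b, h⟩ => ⟨b, a, by rw [← h]; ring⟩, fun ⟨m, n, h⟩ => ⟨n, m, by rw [← h]; ring⟩⟩

theorem DenseRange.dense_image_compl {X α : Type*} [TopologicalSpace X] [T1Space X]
    [∀ x : X, (𝓝[≠] x).NeBot] {f : α → X} (hf : DenseRange f) {s : Set α} (hs : s.Finite) :
    Dense (f '' sᶜ) :=
  (hf.sdiff_finite (hs.image f)).mono <| by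
    rintro _ ⟨⟨k, rfl⟩, hks⟩
    exact ⟨k, fun h => hks ⟨k, h, rfl⟩, rfl⟩

/-- Moving along `(ξ, η) ↦ (ξ + q, η - p)` leaves `pξ + qη`, hence the imaginary part, fixed. -/
theorem lattice_line_eq {a b : ℂ} {s : ℝ} {p q m ξ₀ η₀ : ℤ} (ha : a.im = p * s)
    (hb : b.im = q * s) (hm : p * ξ₀ + q * η₀ = m) (τ t : ℤ) :
    (τ : ℂ) + a * ((ξ₀ + q * t : ℤ) : ℂ) + b * ((η₀ - p * t : ℤ) : ℂ) =
      (((τ : ℝ) + t * (q * a.re - p * b.re) + (ξ₀ * a.re + η₀ * b.re) : ℝ) : ℂ) +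
        Complex.I * ((m * s : ℝ) : ℂ) := by
  have hmR : (p : ℝ) * ξ₀ + q * η₀ = m := by exact_mod_cast hm
  apply Complex.ext <;> simp [ha, hb]
  · ring
  · linear_combination s * hmR

theorem dense_setOf_not_dioph2_line {a b : ℂ} {s : ℝ} {p q : ℤ} (hq : q ≠ 0)
    (hpq : IsCoprime p q) (ha : a.im = p * s) (hb : b.im = q * s)
    (hθ : Irrational (q * a.re - p * b.re)) (m : ℤ) :
    Dense {x : ℝ | ¬ dioph2 a b ((x : ℂ) + Complex.I * ((m * s : ℝ) : ℂ))} := by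
  obtain ⟨u, v, huv⟩ := hpq
  have hm : p * (m * u) + q * (m * v) = m := by linear_combination m * huv
  set line : ℝ → ℂ := fun x => x + Complex.I * ((m * s : ℝ) : ℂ)
  set c : ℝ := (m * u : ℤ) * a.re + (m * v : ℤ) * b.re
  set f : ℤ × ℤ → ℝ := fun k => k.1 + k.2 * (q * a.re - p * b.re) + c
  have hf : DenseRange f :=
    (Homeomorph.addRight c).surjective.denseRange.comp
      (denseRange_intCast_add_intCast_mul hθ) (continuous_add_const c)
  have hset : {x | ¬ dioph2 a b (line x)} = ⋂ n, line ⁻¹' approxSet a b n := by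
    rw [← preimage_iInter, ← setOf_not_dioph2_eq_iInter_approxSet]
    rfl
  rw [hset]
  refine dense_iInter_of_isOpen (fun n => (isOpen_approxSet a b n).preimage (by fun_prop))
    fun n => ?_
  set N : ℤ := n + |m * u|
  refine (hf.dense_image_compl ((finite_Icc (-N) N).prod (finite_Icc (-N) N))).mono ?_
  rintro _ ⟨⟨τ, t⟩, hbox, rfl⟩
  have hsize : (n : ℤ) + 1 ≤ |τ| + |m * u + q * t| + |m * v - p * t| := by
    have hqt : |t| ≤ |q * t| := by
      rw [abs_mul]; exact le_mul_of_one_le_left (abs_nonneg t) (Int.one_le_abs hq)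
    have := abs_sub_abs_le_abs_sub (q * t) (-(m * u))
    rw [sub_neg_eq_add, add_comm, abs_neg] at this
    rw [mem_compl_iff, mem_prod, mem_Icc, mem_Icc, ← abs_le, ← abs_le, not_and_or, not_le,
      not_le] at hbox
    rcases hbox with h | h <;> linarith [abs_nonneg t, abs_nonneg τ, abs_nonneg (m * v - p * t)]
  rw [mem_preimage]
  convert lattice_mem_approxSet a b (by exact_mod_cast hsize) using 1
  exact (lattice_line_eq ha hb hm τ t).symm

theorem stmt18_general (α₁ α₂ : ℂ) (h2 : α₂.im ≠ 0)
    (p : ℤ) (q : ℕ) (hq : 1 ≤ q) (hpq : Int.gcd p (q : ℤ) = 1)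
    (hratio : α₁.im / α₂.im = (p : ℝ) / (q : ℝ))
    (hres : Irrational ((q : ℝ) * α₁.re - (p : ℝ) * α₂.re)) :
    (Dense {x : ℝ | ¬ dioph2 α₁ α₂ (x : ℂ)} ∧ IsGδ {x : ℝ | ¬ dioph2 α₁ α₂ (x : ℂ)}) ∧
      (∀ lam : ℂ, ¬ dioph2 α₁ α₂ lam → ∃ m : ℤ, lam.im = (m : ℝ) * α₂.im / (q : ℝ)) ∧
      (∀ m : ℤ,
        Dense {x : ℝ | ¬ dioph2 α₁ α₂ ((x : ℂ) + Complex.I * (((m : ℝ) * α₂.im / (q : ℝ)) : ℝ))} ∧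
        IsGδ {x : ℝ | ¬ dioph2 α₁ α₂ ((x : ℂ) + Complex.I * (((m : ℝ) * α₂.im / (q : ℝ)) : ℝ))}) := by
  have hq0 : (q : ℝ) ≠ 0 := by positivity
  set s := α₂.im / q
  have ha : α₁.im = (p : ℤ) * s := by
    rw [div_eq_div_iff h2 hq0] at hratio
    simp only [s]
    field_simp
    linarith
  have hb : α₂.im = ((q : ℤ) : ℝ) * s := by simp [s, mul_div_cancel₀ _ hq0]
  have hline (m : ℤ) := dense_setOf_not_dioph2_line (by omega)
    (Int.isCoprime_iff_gcd_eq_one.2 hpq) ha hb (by simpa using hres) m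
  have hGδ (y : ℝ) : IsGδ {x : ℝ | ¬ dioph2 α₁ α₂ ((x : ℂ) + Complex.I * (y : ℂ))} :=
    (isGδ_setOf_not_dioph2 α₁ α₂).preimage (by fun_prop)
  have hy (m : ℤ) : (m : ℝ) * α₂.im / q = m * s := mul_div_assoc _ _ _
  have hreal : {x : ℝ | ¬ dioph2 α₁ α₂ (x : ℂ)} =
      {x : ℝ | ¬ dioph2 α₁ α₂ ((x : ℂ) + Complex.I * (((0 : ℤ) : ℝ) * s : ℝ))} := by simp
  simp only [hy]
  refine ⟨?_, fun lam hlam => ?_, fun m => ⟨hline m, hGδ _⟩⟩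
  · rw [hreal]
    exact ⟨hline 0, hGδ _⟩
  · by_contra! hne
    exact hlam (dioph2_of_im_ne_intCast_mul (div_ne_zero h2 hq0) ha hb hne)

/-- Case `Im α₁ / Im α₂ = p/q ∈ ℚ` (lowest terms) and `q Re α₁ − p Re α₂` irrational:
(a) `𝓝₂` is a dense `G_δ` subset of `ℝ`; (b) `𝓜₂` lies in the lines
`ℓ_m = {Im λ = m Im α₂ / q}`; (c) each `ℓ_m ∩ 𝓜₂` is a dense `G_δ` subset of `ℓ_m`
(parametrizing `ℓ_m` isometrically by the real part). -/
theorem stmt18 (α₁ α₂ : ℂ) (h1 : α₁.im ≠ 0) (h2 : α₂.im ≠ 0)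
    (p : ℤ) (q : ℕ) (hq : 1 ≤ q) (hpq : Int.gcd p (q : ℤ) = 1)
    (hratio : α₁.im / α₂.im = (p : ℝ) / (q : ℝ))
    (hres : Irrational ((q : ℝ) * α₁.re - (p : ℝ) * α₂.re)) :
    (Dense {x : ℝ | ¬ dioph2 α₁ α₂ (x : ℂ)} ∧ IsGδ {x : ℝ | ¬ dioph2 α₁ α₂ (x : ℂ)}) ∧
      (∀ lam : ℂ, ¬ dioph2 α₁ α₂ lam → ∃ m : ℤ, lam.im = (m : ℝ) * α₂.im / (q : ℝ)) ∧
      (∀ m : ℤ,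
        Dense {x : ℝ | ¬ dioph2 α₁ α₂ ((x : ℂ) + Complex.I * (((m : ℝ) * α₂.im / (q : ℝ)) : ℝ))} ∧
        IsGδ {x : ℝ | ¬ dioph2 α₁ α₂ ((x : ℂ) + Complex.I * (((m : ℝ) * α₂.im / (q : ℝ)) : ℝ))}) :=
  stmt18_general α₁ α₂ h2 p q hq hpq hratio hres
end
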